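/- arXiv:1509.00291 — 8 statements merged into one kernel-verified Lean document; each statement's English description precedes it below -/
import Mathlib

section
/- The set P_{q,n} of q-ary sequences of length n whose minimum entry is 0, whose maximum entry is positive, and whose entries have greatest common divisor 1, is a Pearson code: it contains no constant sequence, and if x ∈ P_{q,n} and c₁ + c₂·x ∈ P_{q,n} for real numbers c₁, c₂ with c₂ > 0, then c₁ = 0 and c₂ = 1. -/
/-- `P_{q,n}`: q-ary sequences (`Fin n → ℕ`, entries `≤ q-1`) with minimum
entry 0, positive maximum entry, and gcd of entries equal to 1. -/
def PearsonSet (q n : ℕ) : Set (Fin n → ℕ) :=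
  {x | (∀ i, x i ≤ q - 1) ∧ (∃ i, x i = 0) ∧ (∃ i, 0 < x i) ∧
       Finset.univ.gcd x = 1}

/-! A shift `c₁` is pinned to `0` by the zero entries of `x` and `y`; a scale `c₂` is then pinned
to `1` because `x i₀ • y = y i₀ • x`, and comparing the gcds of both sides gives `x i₀ = y i₀`. -/

namespace PearsonSet

variable {ι : Type*}

theorem const_not_mem (q n c : ℕ) : (fun _ : Fin n => c) ∉ PearsonSet q n := by
  rintro ⟨-, ⟨_, hzero⟩, ⟨_, hpos⟩, -⟩
  exact hpos.ne' hzero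

theorem shift_eq_zero {x y : ι → ℕ} {c₁ c₂ : ℝ} (hc₂ : 0 ≤ c₂)
    (h : ∀ i, c₁ + c₂ * x i = y i) (hx : ∃ i, x i = 0) (hy : ∃ i, y i = 0) : c₁ = 0 := by
  obtain ⟨i, hxi⟩ := hx
  obtain ⟨j, hyj⟩ := hy
  have hc₁_nonneg : 0 ≤ c₁ := by simpa [hxi] using (h i).trans_ge (Nat.cast_nonneg (y i))
  have hj : c₁ + c₂ * x j = 0 := by simpa [hyj] using h j
  nlinarith [mul_nonneg hc₂ (Nat.cast_nonneg (α := ℝ) (x j))]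

theorem eq_of_mul_eq_mul_of_gcd_eq_one {s : Finset ι} {x y : ι → ℕ} {a b : ℕ}
    (hx : s.gcd x = 1) (hy : s.gcd y = 1) (h : ∀ i ∈ s, b * y i = a * x i) : a = b := by
  have hba : b ∣ a := by
    simpa [Finset.gcd_mul_left, hx] using
      Finset.dvd_gcd (s := s) (f := fun i => a * x i) fun i hi => ⟨y i, (h i hi).symm⟩
  have hab : a ∣ b := by
    simpa [Finset.gcd_mul_left, hy] using
      Finset.dvd_gcd (s := s) (f := fun i => b * y i) fun i hi => ⟨x i, h i hi⟩
  exact Nat.dvd_antisymm hab hba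

theorem scale_eq_one {s : Finset ι} {x y : ι → ℕ} {c : ℝ}
    (hx : s.gcd x = 1) (hy : s.gcd y = 1) (h : ∀ i ∈ s, c * x i = y i) : c = 1 := by
  obtain ⟨i₀, hi₀, hxi₀⟩ : ∃ i ∈ s, x i ≠ 0 := by
    by_contra! hzero
    simp [Finset.gcd_eq_zero_iff.2 hzero] at hx
  have hproportional : ∀ i ∈ s, x i₀ * y i = y i₀ * x i := by
    intro i hi
    have : (x i₀ : ℝ) * y i = y i₀ * x i := by rw [← h i hi, ← h i₀ hi₀]; ring
    exact_mod_cast this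
  have heq : y i₀ = x i₀ := eq_of_mul_eq_mul_of_gcd_eq_one hx hy hproportional
  have hxi₀' : (x i₀ : ℝ) ≠ 0 := by exact_mod_cast hxi₀
  have : c * x i₀ = 1 * x i₀ := by rw [h i₀ hi₀, heq, one_mul]
  exact mul_right_cancel₀ hxi₀' this

end PearsonSet

theorem stmt_5_general (q n : ℕ) :
    (∀ c : ℕ, (fun _ : Fin n => c) ∉ PearsonSet q n) ∧
    (∀ x ∈ PearsonSet q n, ∀ y ∈ PearsonSet q n, ∀ c₁ c₂ : ℝ, 0 < c₂ →
      (fun i => c₁ + c₂ * (x i : ℝ)) = (fun i => (y i : ℝ)) →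
      c₁ = 0 ∧ c₂ = 1) := by
  refine ⟨PearsonSet.const_not_mem q n, ?_⟩
  rintro x ⟨-, hx₀, -, hx⟩ y ⟨-, hy₀, -, hy⟩ c₁ c₂ hc₂ hxy
  have hentry : ∀ i, c₁ + c₂ * x i = y i := congrFun hxy
  have hc₁ : c₁ = 0 := PearsonSet.shift_eq_zero hc₂.le hentry hx₀ hy₀
  subst hc₁
  exact ⟨rfl, PearsonSet.scale_eq_one hx hy fun i _ => by simpa using hentry i⟩

/-- `P_{q,n}` is a Pearson code: it contains no constant sequence, and if
`x ∈ P_{q,n}` and the entrywise transform `c₁ + c₂·x` (with `c₂ > 0`) again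
lies in `P_{q,n}` (i.e. equals the real embedding of some member), then
`c₁ = 0` and `c₂ = 1`. -/
theorem stmt_5 (q n : ℕ) (hq : 2 ≤ q) (hn : 2 ≤ n) :
    (∀ c : ℕ, (fun _ : Fin n => c) ∉ PearsonSet q n) ∧
    (∀ x ∈ PearsonSet q n, ∀ y ∈ PearsonSet q n, ∀ c₁ c₂ : ℝ, 0 < c₂ →
      (fun i => c₁ + c₂ * (x i : ℝ)) = (fun i => (y i : ℝ)) →
      c₁ = 0 ∧ c₂ = 1) :=
  stmt_5_general q n
end

section
/- For any set S of q-ary sequences of length n satisfying Property A (no sequence in S is a nontrivial positive affine transformation of another sequence in S) and Property B (S contains no constant sequence), the cardinality of S is at most the cardinality of P_{q,n}, the set of sequences with minimum entry 0, maximum entry positive, and GCD of entries equal to 1. -/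
section PearsonForm

variable {ι : Type*}

noncomputable def minEntry (x : ι → ℕ) : ℕ := ⨅ i, x i

theorem minEntry_le (x : ι → ℕ) (i : ι) : minEntry x ≤ x i :=
  ciInf_le (OrderBot.bddBelow _) i

theorem exists_ne_minEntry {x : ι → ℕ} (hx : ∀ c, x ≠ fun _ => c) : ∃ i, x i ≠ minEntry x := by
  by_contra! h
  exact hx (minEntry x) (funext h)

variable [Fintype ι]

noncomputable def shiftGcd (x : ι → ℕ) : ℕ := Finset.univ.gcd fun i => x i - minEntry x

noncomputable def pearsonForm (x : ι → ℕ) : ι → ℕ := fun i => (x i - minEntry x) / shiftGcd x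

theorem shiftGcd_dvd (x : ι → ℕ) (i : ι) : shiftGcd x ∣ x i - minEntry x :=
  Finset.gcd_dvd (Finset.mem_univ i)

theorem minEntry_add_shiftGcd_mul_pearsonForm (x : ι → ℕ) (i : ι) :
    minEntry x + shiftGcd x * pearsonForm x i = x i := by
  rw [pearsonForm, Nat.mul_div_cancel' (shiftGcd_dvd x i), Nat.add_sub_cancel' (minEntry_le x i)]

theorem pearsonForm_le (x : ι → ℕ) (i : ι) : pearsonForm x i ≤ x i :=
  (Nat.div_le_self _ _).trans (Nat.sub_le _ _)

variable {x : ι → ℕ}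

theorem shiftGcd_pos (hx : ∀ c, x ≠ fun _ => c) : 0 < shiftGcd x := by
  obtain ⟨i, hi⟩ := exists_ne_minEntry hx
  refine Nat.pos_of_ne_zero fun h => hi ?_
  have := Finset.gcd_eq_zero_iff.mp h i (Finset.mem_univ i)
  exact le_antisymm (Nat.sub_eq_zero_iff_le.mp this) (minEntry_le x i)

theorem exists_pearsonForm_eq_zero (hx : ∀ c, x ≠ fun _ => c) : ∃ i, pearsonForm x i = 0 := by
  obtain ⟨j, -⟩ := exists_ne_minEntry hx
  have : Nonempty ι := ⟨j⟩
  obtain ⟨i, hi⟩ : ∃ i, x i = minEntry x := exists_eq_ciInf_of_finite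
  exact ⟨i, by rw [pearsonForm, hi, Nat.sub_self, Nat.zero_div]⟩

theorem exists_pearsonForm_pos (hx : ∀ c, x ≠ fun _ => c) : ∃ i, 0 < pearsonForm x i := by
  obtain ⟨i, hi⟩ := exists_ne_minEntry hx
  have hpos : 0 < x i - minEntry x := by have := minEntry_le x i; omega
  refine ⟨i, ?_⟩
  rw [pearsonForm]
  exact Nat.div_pos (Nat.le_of_dvd hpos (shiftGcd_dvd x i)) (shiftGcd_pos hx)

theorem gcd_pearsonForm (hx : ∀ c, x ≠ fun _ => c) : Finset.univ.gcd (pearsonForm x) = 1 := by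
  obtain ⟨i, hi⟩ := exists_ne_minEntry hx
  have hne : x i - minEntry x ≠ 0 := by have := minEntry_le x i; omega
  unfold pearsonForm shiftGcd
  exact Finset.gcd_div_eq_one (f := fun i => x i - minEntry x) (Finset.mem_univ i) hne

theorem exists_affine_of_pearsonForm_eq {y : ι → ℕ} (hx : ∀ c, x ≠ fun _ => c)
    (hy : ∀ c, y ≠ fun _ => c) (hxy : pearsonForm x = pearsonForm y) :
    ∃ c₁ c₂ : ℝ, 0 < c₂ ∧ (fun i => c₁ + c₂ * (x i : ℝ)) = fun i => (y i : ℝ) := by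
  have hgx : (0 : ℝ) < shiftGcd x := by exact_mod_cast shiftGcd_pos hx
  have hgy : (0 : ℝ) < shiftGcd y := by exact_mod_cast shiftGcd_pos hy
  refine ⟨minEntry y - shiftGcd y / shiftGcd x * minEntry x, shiftGcd y / shiftGcd x,
    div_pos hgy hgx, funext fun i => ?_⟩
  have hxi := minEntry_add_shiftGcd_mul_pearsonForm x i
  have hyi := minEntry_add_shiftGcd_mul_pearsonForm y i
  rw [← hxi, ← hyi, congrFun hxy i]
  push_cast
  field_simp
  ring

end PearsonForm

theorem pearsonForm_mem_pearsonSet {q n : ℕ} {x : Fin n → ℕ} (hxq : ∀ i, x i ≤ q - 1)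
    (hx : ∀ c, x ≠ fun _ => c) : pearsonForm x ∈ PearsonSet q n :=
  ⟨fun i => (pearsonForm_le x i).trans (hxq i), exists_pearsonForm_eq_zero hx,
    exists_pearsonForm_pos hx, gcd_pearsonForm hx⟩

theorem pearsonSet_finite (q n : ℕ) : (PearsonSet q n).Finite :=
  (Set.Finite.pi fun _ : Fin n => Set.finite_Iic (q - 1)).subset fun _ hx i _ => hx.1 i

theorem stmt_6_general (q n : ℕ)
    (S : Set (Fin n → ℕ)) (hSq : ∀ x ∈ S, ∀ i, x i ≤ q - 1)
    (hA : ∀ x ∈ S, ∀ y ∈ S, ∀ c₁ c₂ : ℝ, 0 < c₂ → (c₁, c₂) ≠ (0, 1) →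
        (fun i => c₁ + c₂ * (x i : ℝ)) ≠ (fun i => (y i : ℝ)))
    (hB : ∀ c : ℕ, (fun _ : Fin n => c) ∉ S) :
    S.ncard ≤ (PearsonSet q n).ncard := by
  have hS : ∀ x ∈ S, ∀ c, x ≠ fun _ => c := fun x hx c h => hB c (h ▸ hx)
  refine Set.ncard_le_ncard_of_injOn pearsonForm
    (fun x hx => pearsonForm_mem_pearsonSet (hSq x hx) (hS x hx)) ?_ (pearsonSet_finite q n)
  intro x hx y hy hxy
  obtain ⟨c₁, c₂, hc₂, heq⟩ := exists_affine_of_pearsonForm_eq (hS x hx) (hS y hy) hxy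
  by_cases htriv : (c₁, c₂) = (0, 1)
  · obtain ⟨rfl, rfl⟩ := Prod.ext_iff.mp htriv
    funext i
    simpa using congrFun heq i
  · exact absurd heq (hA x hx y hy c₁ c₂ hc₂ htriv)

/-- Any set `S` of q-ary sequences satisfying Property A (no sequence of `S`
is a nontrivial positive affine transform of another sequence of `S`) and
Property B (no constant sequence lies in `S`) has cardinality at most that of
`P_{q,n}`. -/
theorem stmt_6 (q n : ℕ) (hq : 2 ≤ q) (hn : 2 ≤ n)
    (S : Set (Fin n → ℕ)) (hSq : ∀ x ∈ S, ∀ i, x i ≤ q - 1)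
    (hA : ∀ x ∈ S, ∀ y ∈ S, ∀ c₁ c₂ : ℝ, 0 < c₂ → (c₁, c₂) ≠ (0, 1) →
        (fun i => c₁ + c₂ * (x i : ℝ)) ≠ (fun i => (y i : ℝ)))
    (hB : ∀ c : ℕ, (fun _ : Fin n => c) ∉ S) :
    S.ncard ≤ (PearsonSet q n).ncard :=
  stmt_6_general q n S hSq hA hB
end

section
/- The map sending x to the sequence i ↦ x i − m(x), where m(x) is the minimum entry of x, followed by dividing every entry by the GCD of the resulting entries, is injective on any set S of q-ary sequences satisfying Properties A and B, and its image is contained in P_{q,n}. -/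
/-- The normalization map: subtract the minimum entry, then divide every
entry by the gcd of the resulting entries. -/
noncomputable def normalizeSeq (n : ℕ) (hn : 2 ≤ n) (x : Fin n → ℕ) : Fin n → ℕ :=
  fun i =>
    (x i - Finset.univ.inf' (Finset.univ_nonempty_iff.mpr ⟨⟨0, by omega⟩⟩) x) /
      Finset.univ.gcd
        (fun j => x j - Finset.univ.inf' (Finset.univ_nonempty_iff.mpr ⟨⟨0, by omega⟩⟩) x)

open Finset

section Normalization

variable {n : ℕ} (hn : 2 ≤ n)

noncomputable def seqMin (x : Fin n → ℕ) : ℕ :=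
  univ.inf' (univ_nonempty_iff.mpr ⟨⟨0, by omega⟩⟩) x

noncomputable def seqGcd (x : Fin n → ℕ) : ℕ :=
  univ.gcd fun j => x j - seqMin hn x

theorem seqMin_le (x : Fin n → ℕ) (i : Fin n) : seqMin hn x ≤ x i :=
  inf'_le x (mem_univ i)

theorem exists_eq_seqMin (x : Fin n → ℕ) : ∃ i, x i = seqMin hn x := by
  obtain ⟨i, -, hi⟩ := exists_mem_eq_inf' _ x
  exact ⟨i, hi.symm⟩

theorem seqGcd_dvd (x : Fin n → ℕ) (i : Fin n) : seqGcd hn x ∣ x i - seqMin hn x :=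
  gcd_dvd (mem_univ i)

theorem normalizeSeq_apply (x : Fin n → ℕ) (i : Fin n) :
    normalizeSeq n hn x i = (x i - seqMin hn x) / seqGcd hn x :=
  rfl

theorem seqMin_add_seqGcd_mul_normalizeSeq (x : Fin n → ℕ) (i : Fin n) :
    seqMin hn x + seqGcd hn x * normalizeSeq n hn x i = x i := by
  rw [normalizeSeq_apply, Nat.mul_div_cancel' (seqGcd_dvd hn x i)]
  have := seqMin_le hn x i
  omega

variable {hn}

theorem exists_seqMin_lt {x : Fin n → ℕ} (hx : ∀ c : ℕ, (fun _ => c) ≠ x) :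
    ∃ i, seqMin hn x < x i := by
  by_contra! h
  exact hx (seqMin hn x) (funext fun i => le_antisymm (seqMin_le hn x i) (h i))

theorem seqGcd_pos {x : Fin n → ℕ} {i : Fin n} (hi : seqMin hn x < x i) : 0 < seqGcd hn x := by
  refine Nat.pos_of_ne_zero fun h => ?_
  have := (gcd_eq_zero_iff.mp h) i (mem_univ i)
  omega

theorem normalizeSeq_mem_pearsonSet {q : ℕ} {x : Fin n → ℕ} (hxq : ∀ i, x i ≤ q - 1)
    {i₁ : Fin n} (hi₁ : seqMin hn x < x i₁) : normalizeSeq n hn x ∈ PearsonSet q n := by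
  have hg := seqGcd_pos hi₁
  refine ⟨fun i => ?_, ?_, ⟨i₁, ?_⟩, ?_⟩
  · exact (Nat.div_le_self _ _).trans ((Nat.sub_le _ _).trans (hxq i))
  · obtain ⟨i₀, hi₀⟩ := exists_eq_seqMin hn x
    exact ⟨i₀, by rw [normalizeSeq_apply, hi₀, Nat.sub_self, Nat.zero_div]⟩
  · exact Nat.div_pos (Nat.le_of_dvd (Nat.sub_pos_of_lt hi₁) (seqGcd_dvd hn x i₁)) hg
  · exact gcd_div_eq_one (mem_univ i₁) (Nat.sub_pos_of_lt hi₁).ne'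

theorem exists_affine_of_normalizeSeq_eq {x y : Fin n → ℕ} (hx : 0 < seqGcd hn x)
    (hy : 0 < seqGcd hn y) (hxy : normalizeSeq n hn x = normalizeSeq n hn y) :
    ∃ c₁ c₂ : ℝ, 0 < c₂ ∧ (fun i => c₁ + c₂ * (x i : ℝ)) = fun i => (y i : ℝ) := by
  set c₂ : ℝ := seqGcd hn y / seqGcd hn x
  refine ⟨seqMin hn y - c₂ * seqMin hn x, c₂, by positivity, funext fun i => ?_⟩
  rw [← seqMin_add_seqGcd_mul_normalizeSeq hn x i,
    ← seqMin_add_seqGcd_mul_normalizeSeq hn y i, hxy]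
  push_cast
  simp only [c₂]
  field_simp
  ring

end Normalization

theorem stmt_7_general (q n : ℕ) (hn : 2 ≤ n)
    (S : Set (Fin n → ℕ)) (hSq : ∀ x ∈ S, ∀ i, x i ≤ q - 1)
    (hA : ∀ x ∈ S, ∀ y ∈ S, ∀ c₁ c₂ : ℝ, 0 < c₂ → (c₁, c₂) ≠ (0, 1) →
        (fun i => c₁ + c₂ * (x i : ℝ)) ≠ (fun i => (y i : ℝ)))
    (hB : ∀ c : ℕ, (fun _ : Fin n => c) ∉ S) :
    Set.InjOn (normalizeSeq n hn) S ∧ ∀ x ∈ S, normalizeSeq n hn x ∈ PearsonSet q n := by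
  have hnc : ∀ x ∈ S, ∃ i, seqMin hn x < x i := fun x hx =>
    exists_seqMin_lt fun c hc => hB c (hc ▸ hx)
  refine ⟨fun x hx y hy hxy => ?_, fun x hx => ?_⟩
  · obtain ⟨i, hi⟩ := hnc x hx
    obtain ⟨j, hj⟩ := hnc y hy
    obtain ⟨c₁, c₂, hc₂, hc⟩ := exists_affine_of_normalizeSeq_eq (seqGcd_pos hi) (seqGcd_pos hj) hxy
    obtain ⟨rfl, rfl⟩ : c₁ = 0 ∧ c₂ = 1 := by
      by_contra h
      exact hA x hx y hy c₁ c₂ hc₂ (by simpa [Prod.ext_iff] using h) hc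
    funext i
    exact_mod_cast (by simpa using congrFun hc i : (x i : ℝ) = y i)
  · obtain ⟨i, hi⟩ := hnc x hx
    exact normalizeSeq_mem_pearsonSet (hSq x hx) hi

/-- On any set `S` of q-ary sequences satisfying Properties A and B, the
normalization map (shift so the minimum becomes 0, then divide by the gcd)
is injective, and its image is contained in `P_{q,n}`. -/
theorem stmt_7 (q n : ℕ) (hq : 2 ≤ q) (hn : 2 ≤ n)
    (S : Set (Fin n → ℕ)) (hSq : ∀ x ∈ S, ∀ i, x i ≤ q - 1)
    (hA : ∀ x ∈ S, ∀ y ∈ S, ∀ c₁ c₂ : ℝ, 0 < c₂ → (c₁, c₂) ≠ (0, 1) →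
        (fun i => c₁ + c₂ * (x i : ℝ)) ≠ (fun i => (y i : ℝ)))
    (hB : ∀ c : ℕ, (fun _ : Fin n => c) ∉ S) :
    Set.InjOn (normalizeSeq n hn) S ∧ ∀ x ∈ S, normalizeSeq n hn x ∈ PearsonSet q n :=
  stmt_7_general q n hn S hSq hA hB
end

section
/- For q ≥ 3 and n ≥ 2, the sum of (P_{i,n} − P_{i-1,n}) over all integers i with 2 ≤ i ≤ q such that i−1 divides q−1 equals q^n − 2(q−1)^n + (q−2)^n. -/
/-!
Call a sequence in `[0, d]^n` spanning if it attains both `0` and `d`. For `d ≥ 1`,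
`P_{d+1,n} - P_{d,n}` counts the spanning sequences in `[0, d]^n` with gcd `1`. A spanning
sequence in `[0, m]^n` with gcd `g` is `g` times a unique primitive spanning sequence in
`[0, m / g]^n`, so summing over the divisors `d` of `m = q - 1` counts all spanning sequences in
`[0, m]^n`, and by inclusion–exclusion there are `(m + 1)^n - 2 m^n + (m - 1)^n` of them.
-/

open Finset

/-- `P_{i,n}`: the number of sequences `x : Fin n → ℕ` with all entries
`≤ i-1`, minimum entry 0, positive maximum entry, and gcd of entries 1.
(For `i = 1` this is automatically `0`.) -/
noncomputable def pearsonCount (i n : ℕ) : ℕ :=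
  Set.ncard {x : Fin n → ℕ |
    (∀ j, x j ≤ i - 1) ∧ (∃ j, x j = 0) ∧ (∃ j, 0 < x j) ∧
    Finset.univ.gcd x = 1}

namespace Finset

theorem card_filter_and_eq_intCast {α : Type*} [DecidableEq α] (s : Finset α) (p q : α → Prop)
    [DecidablePred p] [DecidablePred q] :
    (#{x ∈ s | p x ∧ q x} : ℤ)
      = #s - #{x ∈ s | ¬p x} - #{x ∈ s | ¬q x} + #{x ∈ s | ¬p x ∧ ¬q x} := by
  have hunion := card_union_add_card_inter {x ∈ s | ¬p x} {x ∈ s | ¬q x}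
  rw [← filter_or, ← filter_and] at hunion
  have hsplit := card_filter_add_card_filter_not (s := s) (p := fun x => p x ∧ q x)
  rw [filter_congr (q := fun x => ¬p x ∨ ¬q x) fun x _ => not_and_or] at hsplit
  omega

end Finset

theorem Nat.sum_filter_Icc_pred_dvd_pred {M : Type*} [AddCommMonoid M] {q : ℕ} (hq : 2 ≤ q)
    (f : ℕ → M) :
    ∑ i ∈ (Icc 2 q).filter (fun i => i - 1 ∣ q - 1), f (i - 1) = ∑ d ∈ (q - 1).divisors, f d := by
  refine sum_nbij' (· - 1) (· + 1) ?_ ?_ ?_ ?_ fun _ _ => rfl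
  · intro i hi
    simp only [mem_filter, mem_Icc] at hi
    exact Nat.mem_divisors.2 ⟨hi.2, by omega⟩
  · intro d hd
    have hdvd := Nat.dvd_of_mem_divisors hd
    have := Nat.le_of_dvd (by omega) hdvd
    have := Nat.pos_of_dvd_of_pos hdvd (by omega)
    simp only [mem_filter, mem_Icc, Nat.add_sub_cancel]
    exact ⟨⟨by omega, by omega⟩, hdvd⟩
  · intro i hi
    simp only [mem_filter, mem_Icc] at hi
    omega
  · intro d _
    simp

namespace Pearson

def boundedSeqs (d n : ℕ) : Finset (Fin n → ℕ) :=
  Fintype.piFinset fun _ => range (d + 1)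

def pearsonSeqs (d n : ℕ) : Finset (Fin n → ℕ) :=
  {x ∈ boundedSeqs d n | (∃ j, x j = 0) ∧ (∃ j, 0 < x j) ∧ univ.gcd x = 1}

def spanningSeqs (d n : ℕ) : Finset (Fin n → ℕ) :=
  {x ∈ boundedSeqs d n | (∃ j, x j = 0) ∧ ∃ j, x j = d}

def primitiveSpanningSeqs (d n : ℕ) : Finset (Fin n → ℕ) :=
  {x ∈ spanningSeqs d n | univ.gcd x = 1}

variable {d m n : ℕ}

@[simp]
theorem mem_boundedSeqs {x : Fin n → ℕ} : x ∈ boundedSeqs d n ↔ ∀ j, x j ≤ d := by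
  simp [boundedSeqs]

theorem pearsonCount_eq_card (i n : ℕ) : pearsonCount i n = #(pearsonSeqs (i - 1) n) := by
  rw [pearsonCount, ← Set.ncard_coe_finset]
  congr 1
  ext x
  simp [pearsonSeqs]

theorem card_pearsonSeqs (hd : 1 ≤ d) :
    #(pearsonSeqs d n) = #(primitiveSpanningSeqs d n) + #(pearsonSeqs (d - 1) n) := by
  rw [← card_filter_add_card_filter_not (s := pearsonSeqs d n) (p := fun x => ∃ j, x j = d)]
  congr 2 <;> ext x
  · simp only [pearsonSeqs, primitiveSpanningSeqs, spanningSeqs, mem_filter, mem_boundedSeqs]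
    constructor
    · rintro ⟨⟨hle, hzero, -, hgcd⟩, htop⟩
      exact ⟨⟨hle, hzero, htop⟩, hgcd⟩
    · rintro ⟨⟨hle, hzero, j, hj⟩, hgcd⟩
      exact ⟨⟨hle, hzero, ⟨j, by omega⟩, hgcd⟩, j, hj⟩
  · simp only [pearsonSeqs, mem_filter, mem_boundedSeqs, not_exists]
    constructor
    · rintro ⟨⟨hle, rest⟩, hne⟩
      exact ⟨fun j => by have := hle j; have := hne j; omega, rest⟩
    · rintro ⟨hle, rest⟩
      exact ⟨⟨fun j => by have := hle j; omega, rest⟩, fun j => by have := hle j; omega⟩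

theorem pearsonCount_sub_pearsonCount_pred {i : ℕ} (hi : 2 ≤ i) :
    (pearsonCount i n : ℤ) - pearsonCount (i - 1) n = #(primitiveSpanningSeqs (i - 1) n) := by
  rw [pearsonCount_eq_card, pearsonCount_eq_card, card_pearsonSeqs (by omega)]
  push_cast
  ring

theorem card_filter_gcd_spanningSeqs (hm : m ≠ 0) {g : ℕ} (hg : g ∣ m) :
    #{x ∈ spanningSeqs m n | univ.gcd x = g} = #(primitiveSpanningSeqs (m / g) n) := by
  have hg0 : 0 < g := Nat.pos_of_dvd_of_pos hg (Nat.pos_of_ne_zero hm)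
  refine card_nbij' (fun x j => x j / g) (fun y j => g * y j) ?_ ?_ ?_ ?_
  · intro x hx
    simp only [mem_coe, spanningSeqs, primitiveSpanningSeqs, mem_filter, mem_boundedSeqs] at hx ⊢
    obtain ⟨⟨hle, ⟨j₀, hj₀⟩, j₁, hj₁⟩, hgcd⟩ := hx
    refine ⟨⟨fun j => Nat.div_le_div_right (hle j), ⟨j₀, by simp [hj₀]⟩, j₁, by rw [hj₁]⟩, ?_⟩
    rw [← hgcd]
    exact gcd_div_eq_one (mem_univ j₁) (by omega)
  · intro y hy
    simp only [mem_coe, spanningSeqs, primitiveSpanningSeqs, mem_filter, mem_boundedSeqs] at hy ⊢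
    obtain ⟨⟨hle, ⟨j₀, hj₀⟩, j₁, hj₁⟩, hgcd⟩ := hy
    refine ⟨⟨fun j => ?_, ⟨j₀, by simp [hj₀]⟩, j₁, by rw [hj₁, Nat.mul_div_cancel' hg]⟩, ?_⟩
    · calc g * y j ≤ g * (m / g) := Nat.mul_le_mul_left g (hle j)
        _ = m := Nat.mul_div_cancel' hg
    · rw [Finset.gcd_mul_left, hgcd, normalize_eq, mul_one]
  · intro x hx
    simp only [mem_coe, mem_filter] at hx
    funext j
    exact Nat.mul_div_cancel' (hx.2 ▸ gcd_dvd (mem_univ j))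
  · intro y _
    funext j
    exact Nat.mul_div_cancel_left (y j) hg0

theorem sum_divisors_card_primitiveSpanningSeqs (hm : m ≠ 0) :
    ∑ d ∈ m.divisors, #(primitiveSpanningSeqs d n) = #(spanningSeqs m n) := by
  have hgcd_mem : ∀ x ∈ spanningSeqs m n, univ.gcd x ∈ m.divisors := by
    intro x hx
    obtain ⟨-, j, hj⟩ := (mem_filter.1 hx).2
    exact Nat.mem_divisors.2 ⟨hj ▸ gcd_dvd (mem_univ j), hm⟩
  rw [card_eq_sum_card_fiberwise hgcd_mem, ← Nat.sum_div_divisors]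
  refine sum_congr rfl fun g hg => ?_
  rw [card_filter_gcd_spanningSeqs hm (Nat.dvd_of_mem_divisors hg)]

theorem card_spanningSeqs (hm : 1 ≤ m) :
    (#(spanningSeqs m n) : ℤ) = ((m : ℤ) + 1) ^ n - 2 * (m : ℤ) ^ n + ((m : ℤ) - 1) ^ n := by
  have hcard (p : ℕ → Prop) [DecidablePred p] :
      #{x ∈ boundedSeqs m n | ∀ j, p (x j)} = #{a ∈ range (m + 1) | p a} ^ n := by
    rw [← Fintype.card_piFinset_const]
    congr 1
    ext x
    simp [boundedSeqs, forall_and]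
  have hne_zero : {a ∈ range (m + 1) | ¬a = 0} = Ioc 0 m := by ext; simp; omega
  have hne_top : {a ∈ range (m + 1) | ¬a = m} = range m := by ext; simp; omega
  have hne_both : {a ∈ range (m + 1) | ¬a = 0 ∧ ¬a = m} = Ioo 0 m := by ext; simp; omega
  rw [spanningSeqs, card_filter_and_eq_intCast]
  simp only [not_exists, ← forall_and]
  rw [hcard (¬· = 0), hcard (¬· = m), hcard (fun a => ¬a = 0 ∧ ¬a = m), hne_zero, hne_top,
    hne_both, boundedSeqs, Fintype.card_piFinset_const]
  push_cast [Nat.card_Ioc, Nat.card_Ioo, Nat.sub_zero, card_range, hm]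
  ring

end Pearson

open Pearson in
theorem stmt_8_general (q n : ℕ) (hq : 3 ≤ q) :
    (∑ i ∈ (Finset.Icc 2 q).filter (fun i => (i - 1) ∣ (q - 1)),
        ((pearsonCount i n : ℤ) - (pearsonCount (i - 1) n : ℤ)))
      = (q : ℤ) ^ n - 2 * ((q : ℤ) - 1) ^ n + ((q : ℤ) - 2) ^ n := by
  have hm : q - 1 ≠ 0 := by omega
  calc _ = ∑ i ∈ (Icc 2 q).filter (fun i => i - 1 ∣ q - 1),
        (#(primitiveSpanningSeqs (i - 1) n) : ℤ) :=
        sum_congr rfl fun i hi =>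
          pearsonCount_sub_pearsonCount_pred (mem_Icc.1 (mem_filter.1 hi).1).1
    _ = ∑ d ∈ (q - 1).divisors, (#(primitiveSpanningSeqs d n) : ℤ) :=
        Nat.sum_filter_Icc_pred_dvd_pred (by omega) fun d => (#(primitiveSpanningSeqs d n) : ℤ)
    _ = #(spanningSeqs (q - 1) n) := by
        exact_mod_cast sum_divisors_card_primitiveSpanningSeqs hm
    _ = _ := by
        rw [card_spanningSeqs (by omega)]
        push_cast [(by omega : 1 ≤ q)]
        ring

/-- For `q ≥ 3` and `n ≥ 2`,
`∑_{2 ≤ i ≤ q, (i-1) ∣ (q-1)} (P_{i,n} - P_{i-1,n}) = q^n - 2(q-1)^n + (q-2)^n`. -/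
theorem stmt_8 (q n : ℕ) (hq : 3 ≤ q) (hn : 2 ≤ n) :
    (∑ i ∈ (Finset.Icc 2 q).filter (fun i => (i - 1) ∣ (q - 1)),
        ((pearsonCount i n : ℤ) - (pearsonCount (i - 1) n : ℤ)))
      = (q : ℤ) ^ n - 2 * ((q : ℤ) - 1) ^ n + ((q : ℤ) - 2) ^ n :=
  stmt_8_general q n hq
end

section
/- The map ψ dividing each sequence by the GCD of its entries is a bijection from the set of q-ary sequences of length n containing both 0 and q−1 as entries, onto the disjoint union over divisors d of q−1 of the sets D_{(q−1)/d + 1, n}, where D_{i,n} is the set of sequences with entries in {0,...,i−1}, minimum 0, maximum i−1, and gcd 1. -/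
/-- `D_{i,n}`: sequences `y : Fin n → ℕ` with entries in `{0,…,i-1}`,
minimum entry 0, maximum entry exactly `i-1`, and gcd of entries 1. -/
def Dset (i n : ℕ) : Set (Fin n → ℕ) :=
  {y | (∀ j, y j ≤ i - 1) ∧ (∃ j, y j = 0) ∧ (∃ j, y j = i - 1) ∧
       Finset.univ.gcd y = 1}

/-- The map `ψ`, dividing each sequence entrywise by the gcd of its entries,
is a bijection from the set `S_{q,n}(0,q-1)` of `q`-ary sequences containing
both `0` and `q-1`, onto the disjoint union over the divisors `d` of `q-1` of
the sets `D_{(q-1)/d+1,n}`. -/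
theorem stmt_9 (q n : ℕ) (hq : 2 ≤ q) (hn : 2 ≤ n) :
    Set.BijOn (fun (x : Fin n → ℕ) (i : Fin n) => x i / Finset.univ.gcd x)
      {x : Fin n → ℕ | (∀ i, x i ≤ q - 1) ∧ (∃ i, x i = 0) ∧ (∃ i, x i = q - 1)}
      (⋃ d ∈ (q - 1).divisors, Dset ((q - 1) / d + 1) n) ∧
    Set.Pairwise ((q - 1).divisors : Set ℕ)
      (fun d d' => Disjoint (Dset ((q - 1) / d + 1) n) (Dset ((q - 1) / d' + 1) n)) := by
  have hq1 : 0 < q - 1 := by omega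
  constructor
  · refine ⟨?_, ?_, ?_⟩
    · -- MapsTo
      rintro x ⟨hle, ⟨i0, hi0⟩, ⟨i1, hi1⟩⟩
      set d := Finset.univ.gcd x with hd
      have hdvd : ∀ i, d ∣ x i := fun i => Finset.gcd_dvd (Finset.mem_univ i)
      have hdq : d ∣ q - 1 := hi1 ▸ hdvd i1
      refine Set.mem_iUnion₂.mpr ⟨d, Nat.mem_divisors.mpr ⟨hdq, by omega⟩, ?_, ⟨i0, ?_⟩,
        ⟨i1, ?_⟩, ?_⟩
      · intro j; simpa using Nat.div_le_div_right (hle j)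
      · simp [hi0]
      · simp [hi1, hd]
      · exact Finset.gcd_div_eq_one (Finset.mem_univ i1) (f := x) (by omega)
    · -- InjOn
      rintro x ⟨hle, ⟨i0, hi0⟩, ⟨i1, hi1⟩⟩ x' ⟨hle', ⟨i0', hi0'⟩, ⟨i1', hi1'⟩⟩ h
      set d := Finset.univ.gcd x with hd
      set d' := Finset.univ.gcd x' with hd'
      have hdvd : ∀ i, d ∣ x i := fun i => Finset.gcd_dvd (Finset.mem_univ i)
      have hdvd' : ∀ i, d' ∣ x' i := fun i => Finset.gcd_dvd (Finset.mem_univ i)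
      have hdq : d ∣ q - 1 := hi1 ▸ hdvd i1
      have hdq' : d' ∣ q - 1 := hi1' ▸ hdvd' i1'
      have heq : ∀ i, x i / d = x' i / d' := fun i => congrFun h i
      have h1 : (q - 1) / d ≤ (q - 1) / d' := by
        calc (q - 1) / d = x' i1 / d' := by rw [← hi1, heq]
        _ ≤ (q - 1) / d' := Nat.div_le_div_right (hle' i1)
      have h2 : (q - 1) / d' ≤ (q - 1) / d := by
        calc (q - 1) / d' = x i1' / d := by rw [← hi1', heq]
        _ ≤ (q - 1) / d := Nat.div_le_div_right (hle i1')
      have hdd : d = d' := by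
        have := le_antisymm h1 h2
        rw [← Nat.div_div_self hdq (by omega), ← Nat.div_div_self hdq' (by omega), this]
      funext i
      rw [← Nat.mul_div_cancel' (hdvd i), ← Nat.mul_div_cancel' (hdvd' i), heq i, hdd]
    · -- SurjOn
      rintro y hy
      obtain ⟨d, hd, hle, ⟨i0, hi0⟩, ⟨i1, hi1⟩, hgcd⟩ := Set.mem_iUnion₂.mp hy
      obtain ⟨hdq, -⟩ := Nat.mem_divisors.mp hd
      have hdpos : 0 < d := Nat.pos_of_dvd_of_pos hdq hq1
      simp only [add_tsub_cancel_right] at hle hi1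
      refine ⟨fun i => d * y i, ⟨fun i => ?_, ⟨i0, by simp [hi0]⟩,
        ⟨i1, by simp only []; rw [hi1, Nat.mul_div_cancel' hdq]⟩⟩, ?_⟩
      · calc d * y i ≤ d * ((q - 1) / d) := Nat.mul_le_mul_left d (hle i)
        _ = q - 1 := Nat.mul_div_cancel' hdq
      · have hg : Finset.univ.gcd (fun i => d * y i) = d := by
          rw [Finset.gcd_mul_left, hgcd]
          simp
        funext i
        simp only [hg]
        exact Nat.mul_div_cancel_left _ hdpos
  · -- Pairwise disjoint
    intro d hd d' hd' hne
    rw [Set.disjoint_left]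
    rintro y ⟨hle, -, ⟨i1, hi1⟩, -⟩ ⟨hle', -, ⟨i1', hi1'⟩, -⟩
    simp only [Finset.mem_coe, Nat.mem_divisors] at hd hd'
    simp only [add_tsub_cancel_right] at hle hle' hi1 hi1'
    have h1 : (q - 1) / d ≤ (q - 1) / d' := hi1 ▸ hle' i1
    have h2 : (q - 1) / d' ≤ (q - 1) / d := hi1' ▸ hle i1'
    apply hne
    rw [← Nat.div_div_self hd.1 (by omega), ← Nat.div_div_self hd'.1 (by omega),
      le_antisymm h1 h2]
end

section
/- For positive integers n and q, the number of sequences x : Fin n → ℕ with all entries ≤ q−1, minimum entry 0, maximum entry positive, and gcd of entries equal to 1, equals the sum over d from 1 to q−1 of μ(d)·((⌊(q−1)/d⌋+1)^n − ⌊(q−1)/d⌋^n − 1), where μ is the Möbius function. -/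
/-!
Möbius inversion over the gcd: writing `[gcd x = 1] = ∑_{d ∣ gcd x} μ d`, the count becomes
`∑_d μ d · #{x | d divides every entry}`. Dividing by `d` identifies those `x` with the sequences
of entries `≤ ⌊(q-1)/d⌋` that have a zero and a nonzero entry, and there are
`(k+1)^n - k^n - 1` of those with entries `≤ k`: all sequences, minus those without a zero entry,
minus the zero sequence.
-/

open Finset ArithmeticFunction
open scoped ArithmeticFunction.Moebius

lemma sum_moebius_divisors (g : ℕ) : ∑ d ∈ g.divisors, (μ d : ℤ) = if g = 1 then 1 else 0 := by
  rw [← coe_mul_zeta_apply, moebius_mul_coe_zeta, one_apply]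

lemma card_filter_eq_one_eq_sum_moebius {α : Type*} (s : Finset α) (f : α → ℕ) (m : ℕ)
    (hf : ∀ a ∈ s, f a ≠ 0 ∧ f a ≤ m) :
    (#{a ∈ s | f a = 1} : ℤ) = ∑ d ∈ Icc 1 m, μ d * #{a ∈ s | d ∣ f a} := by
  have indicator_eq (a : α) (ha : a ∈ s) :
      (if f a = 1 then 1 else 0 : ℤ) = ∑ d ∈ Icc 1 m, if d ∣ f a then (μ d : ℤ) else 0 := by
    obtain ⟨hfa0, hfam⟩ := hf a ha
    have : {d ∈ Icc 1 m | d ∣ f a} = (f a).divisors := by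
      ext d
      simp only [mem_filter, mem_Icc, Nat.mem_divisors]
      refine ⟨fun h => ⟨h.2, hfa0⟩, fun h => ⟨⟨Nat.pos_of_dvd_of_pos h.1 (by omega), ?_⟩, h.1⟩⟩
      exact (Nat.le_of_dvd (by omega) h.1).trans hfam
    rw [← sum_filter, this, sum_moebius_divisors]
  calc (#{a ∈ s | f a = 1} : ℤ)
      = ∑ a ∈ s, ∑ d ∈ Icc 1 m, if d ∣ f a then (μ d : ℤ) else 0 := by
        rw [card_filter]; push_cast
        exact sum_congr rfl indicator_eq
    _ = ∑ d ∈ Icc 1 m, μ d * #{a ∈ s | d ∣ f a} := by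
        rw [sum_comm]
        refine sum_congr rfl fun d _ => ?_
        rw [← sum_filter, sum_const, nsmul_eq_mul, mul_comm]

section Cube

variable {ι : Type*} [Fintype ι] [DecidableEq ι]

def cube (ι : Type*) [Fintype ι] [DecidableEq ι] (k : ℕ) : Finset (ι → ℕ) :=
  Fintype.piFinset fun _ => range (k + 1)

def IsMixed (x : ι → ℕ) : Prop := (∃ i, x i = 0) ∧ ∃ i, 0 < x i

instance : DecidablePred (IsMixed (ι := ι)) := fun _ => by unfold IsMixed; infer_instance

omit [Fintype ι] [DecidableEq ι] in
lemma IsMixed.mul_left {x : ι → ℕ} (hx : IsMixed x) {d : ℕ} (hd : 0 < d) :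
    IsMixed fun i => d * x i := by
  obtain ⟨⟨i, hi⟩, ⟨j, hj⟩⟩ := hx
  exact ⟨⟨i, by simp [hi]⟩, ⟨j, Nat.mul_pos hd hj⟩⟩

lemma mem_cube {k : ℕ} {x : ι → ℕ} : x ∈ cube ι k ↔ ∀ i, x i ≤ k := by
  simp only [cube, Fintype.mem_piFinset, mem_range, Nat.lt_succ_iff]

lemma gcd_ne_zero_and_le_of_isMixed {k : ℕ} {x : ι → ℕ} (hxk : x ∈ cube ι k) (hx : IsMixed x) :
    univ.gcd x ≠ 0 ∧ univ.gcd x ≤ k := by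
  obtain ⟨-, ⟨i, hi⟩⟩ := hx
  have hdvd : univ.gcd x ∣ x i := gcd_dvd (mem_univ i)
  exact ⟨fun h => by simp_all, (Nat.le_of_dvd hi hdvd).trans (mem_cube.1 hxk i)⟩

lemma card_filter_isMixed_cube [Nonempty ι] (k : ℕ) :
    (#{x ∈ cube ι k | IsMixed x} : ℤ) = (k + 1) ^ Fintype.card ι - k ^ Fintype.card ι - 1 := by
  set positive : Finset (ι → ℕ) := Fintype.piFinset fun _ => Icc 1 k
  have positive_subset : positive ⊆ cube ι k := by
    intro x hx
    simp only [positive, Fintype.mem_piFinset, mem_Icc] at hx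
    exact mem_cube.2 fun i => (hx i).2
  have zero_mem : (0 : ι → ℕ) ∈ cube ι k \ positive := by
    simp [positive, mem_cube, Fintype.mem_piFinset, mem_Icc]
  have mixed_eq : {x ∈ cube ι k | IsMixed x} = (cube ι k \ positive).erase 0 := by
    ext x
    rw [mem_filter]
    simp only [mem_erase, mem_sdiff, IsMixed, positive, Fintype.mem_piFinset,
      mem_Icc, ne_eq, funext_iff, Pi.zero_apply, not_forall, mem_cube]
    refine ⟨fun ⟨hk, ⟨i, hi⟩, ⟨j, hj⟩⟩ => ⟨⟨j, hj.ne'⟩, hk, i, by omega⟩,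
      fun ⟨⟨j, hj⟩, hk, i, hi⟩ => ⟨hk, ⟨i, by have := hk i; omega⟩, ⟨j, by omega⟩⟩⟩
  have card_cube : #(cube ι k) = (k + 1) ^ Fintype.card ι := by simp [cube]
  have card_positive : #positive = k ^ Fintype.card ι := by simp [positive]
  have h := card_sdiff_add_card_eq_card positive_subset
  rw [← card_erase_add_one zero_mem, ← mixed_eq, card_cube, card_positive] at h
  rw [eq_sub_iff_add_eq, eq_sub_iff_add_eq]
  exact_mod_cast h

lemma card_filter_isMixed_dvd_cube {d : ℕ} (hd : 0 < d) (k : ℕ) :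
    #{x ∈ cube ι k | IsMixed x ∧ d ∣ univ.gcd x} = #{y ∈ cube ι (k / d) | IsMixed y} := by
  refine card_nbij' (fun x i => x i / d) (fun y i => d * y i) ?_ ?_ ?_ ?_
  · rintro x hx
    simp only [coe_filter, Set.mem_ofPred_eq, mem_cube] at hx ⊢
    obtain ⟨hk, hmix, hdvd⟩ := hx
    rw [Finset.dvd_gcd_iff] at hdvd
    replace hdvd i : d ∣ x i := hdvd i (mem_univ i)
    refine ⟨fun i => Nat.div_le_div_right (hk i), ?_⟩
    obtain ⟨⟨i, hi⟩, ⟨j, hj⟩⟩ := hmix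
    exact ⟨⟨i, by simp [hi]⟩, ⟨j, Nat.div_pos (Nat.le_of_dvd hj (hdvd j)) hd⟩⟩
  · rintro y hy
    simp only [coe_filter, Set.mem_ofPred_eq, mem_cube] at hy ⊢
    obtain ⟨hk, hmix⟩ := hy
    refine ⟨fun i => ?_, hmix.mul_left hd, Finset.dvd_gcd fun i _ => dvd_mul_right d (y i)⟩
    calc d * y i ≤ d * (k / d) := Nat.mul_le_mul_left d (hk i)
      _ ≤ k := Nat.mul_div_le k d
  · rintro x hx
    simp only [coe_filter, Set.mem_ofPred_eq] at hx
    exact funext fun i => Nat.mul_div_cancel' (Finset.dvd_gcd_iff.1 hx.2.2 i (mem_univ i))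
  · rintro y -
    exact funext fun i => Nat.mul_div_cancel_left (y i) hd

end Cube

theorem stmt_10_general (q n : ℕ) (hn : 0 < n) :
    ((Set.ncard {x : Fin n → ℕ |
        (∀ i, x i ≤ q - 1) ∧ (∃ i, x i = 0) ∧ (∃ i, 0 < x i) ∧
        Finset.univ.gcd x = 1} : ℤ))
      = ∑ d ∈ Finset.Icc 1 (q - 1),
          ArithmeticFunction.moebius d *
            ((((q - 1) / d + 1 : ℕ) : ℤ) ^ n - (((q - 1) / d : ℕ) : ℤ) ^ n - 1) := by
  have : Nonempty (Fin n) := ⟨⟨0, hn⟩⟩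
  have hset : {x : Fin n → ℕ | (∀ i, x i ≤ q - 1) ∧ (∃ i, x i = 0) ∧ (∃ i, 0 < x i) ∧
      univ.gcd x = 1} = ↑{x ∈ {x ∈ cube (Fin n) (q - 1) | IsMixed x} | univ.gcd x = 1} := by
    ext x
    rw [Set.mem_ofPred_eq, mem_coe, mem_filter, mem_filter, mem_cube]
    simp only [IsMixed, and_assoc]
  rw [hset, Set.ncard_coe_finset, card_filter_eq_one_eq_sum_moebius _ _ (q - 1) fun x hx =>
    gcd_ne_zero_and_le_of_isMixed (mem_filter.1 hx).1 (mem_filter.1 hx).2]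
  refine sum_congr rfl fun d hd => ?_
  rw [filter_filter, card_filter_isMixed_dvd_cube (mem_Icc.1 hd).1, card_filter_isMixed_cube,
    Fintype.card_fin, Nat.cast_succ]

/-- For positive integers `n` and `q` (with `q ≥ 2`), the number of sequences
`x : Fin n → ℕ` with entries `≤ q-1`, minimum entry 0, positive maximum entry,
and gcd of entries 1 equals
`∑_{d=1}^{q-1} μ(d)·((⌊(q-1)/d⌋+1)^n − ⌊(q-1)/d⌋^n − 1)`. -/
theorem stmt_10 (q n : ℕ) (hq : 2 ≤ q) (hn : 0 < n) :
    ((Set.ncard {x : Fin n → ℕ |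
        (∀ i, x i ≤ q - 1) ∧ (∃ i, x i = 0) ∧ (∃ i, 0 < x i) ∧
        Finset.univ.gcd x = 1} : ℤ))
      = ∑ d ∈ Finset.Icc 1 (q - 1),
          ArithmeticFunction.moebius d *
            ((((q - 1) / d + 1 : ℕ) : ℤ) ^ n - (((q - 1) / d : ℕ) : ℤ) ^ n - 1) :=
  stmt_10_general q n hn
end

section
/- For any q ≥ 2, the number of sequences in {0,...,q−1}^3 with minimum entry 0, positive maximum entry, and gcd of entries 1 equals 6·Σ_{j=1}^{q−1} φ(j), where φ is Euler's totient function. -/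
open Finset

def Fq (q : ℕ) : Finset (Fin 3 → ℕ) :=
  (Fintype.piFinset (fun _ => Finset.range q)).filter
    (fun x => (∃ i, x i = 0) ∧ (∃ i, 0 < x i) ∧ Finset.univ.gcd x = 1)

lemma mem_Fq {q : ℕ} {x : Fin 3 → ℕ} :
    x ∈ Fq q ↔ (∀ i, x i < q) ∧ (∃ i, x i = 0) ∧ (∃ i, 0 < x i) ∧
      Finset.univ.gcd x = 1 := by
  simp [Fq, Fintype.mem_piFinset, and_assoc]

lemma gcd3 (x : Fin 3 → ℕ) :
    Finset.univ.gcd x = Nat.gcd (x 0) (Nat.gcd (x 1) (x 2)) := by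
  rw [show (univ : Finset (Fin 3)) = {0, 1, 2} by decide]
  simp [Finset.gcd_insert, Finset.gcd_singleton]
  rfl

lemma gcd_comp (σ : Equiv.Perm (Fin 3)) (x : Fin 3 → ℕ) :
    Finset.univ.gcd (x ∘ σ) = Finset.univ.gcd x := by
  rw [← Finset.gcd_image, Finset.image_univ_equiv]

def gmap (q : ℕ) : Equiv.Perm (Fin 3) × ℕ → (Fin 3 → ℕ) :=
  fun p => ![0, p.2, q] ∘ p.1

def NewF (q : ℕ) : Finset (Fin 3 → ℕ) :=
  (((univ : Finset (Equiv.Perm (Fin 3))) ×ˢ ((range q).filter q.Coprime)).image (gmap q))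

lemma vec_inj {c q : ℕ} (hc : 0 < c) (hcq : c < q) :
    Function.Injective ![0, c, q] := by
  intro a b h
  fin_cases a <;> fin_cases b <;> simp_all <;> omega

lemma card_NewF {q : ℕ} (hq : 2 ≤ q) : (NewF q).card = 6 * q.totient := by
  rw [NewF, Finset.card_image_of_injOn, Finset.card_product]
  · rw [Finset.card_univ, show Fintype.card (Equiv.Perm (Fin 3)) = 6 from by decide]
    rfl
  · rintro ⟨σ, c⟩ hm ⟨τ, d⟩ hm' h
    simp only [Finset.mem_coe, Finset.mem_product, Finset.mem_filter, Finset.mem_range, Finset.mem_univ] at hm hm'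
    have hc0 : 0 < c := by
      rcases Nat.eq_zero_or_pos c with h0 | h0
      · exfalso; have := hm.2.2; rw [h0] at this
        rw [Nat.coprime_zero_right] at this; omega
      · exact h0
    have hd0 : 0 < d := by
      rcases Nat.eq_zero_or_pos d with h0 | h0
      · exfalso; have := hm'.2.2; rw [h0] at this
        rw [Nat.coprime_zero_right] at this; omega
      · exact h0
    have hsum : c + q = d + q := by
      have h1 := congrArg (fun f => ∑ i, f i) h
      simpa [gmap, Equiv.sum_comp σ (![0, c, q]), Equiv.sum_comp τ (![0, d, q]),
        Fin.sum_univ_three] using h1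
    have hcd : c = d := by omega
    subst hcd
    have hst : σ = τ := by
      ext i
      have h2 := congrFun h i
      simp only [gmap, Function.comp_apply] at h2
      exact congrArg Fin.val (vec_inj hc0 hm.2.1 h2)
    simp [hst]

lemma NewF_subset {q : ℕ} (hq : 2 ≤ q) : NewF q ⊆ Fq (q + 1) := by
  intro x hx
  simp only [NewF, Finset.mem_image, Finset.mem_product, Finset.mem_filter,
    Finset.mem_range, Finset.mem_univ, true_and] at hx
  obtain ⟨⟨σ, c⟩, ⟨hcq, hcop⟩, rfl⟩ := hx
  rw [mem_Fq]
  refine ⟨?_, ⟨σ.symm 0, ?_⟩, ⟨σ.symm 2, ?_⟩, ?_⟩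
  · intro i
    have : σ i = 0 ∨ σ i = 1 ∨ σ i = 2 := by omega
    rcases this with h | h | h <;> simp [gmap, h] <;> omega
  · simp [gmap]
  · simp [gmap]; omega
  · show Finset.univ.gcd (![0, c, q] ∘ σ) = 1
    rw [gcd_comp, gcd3]
    simpa [Nat.gcd_comm] using hcop

lemma three_dist : ∀ a b : Fin 3, a ≠ b → ∃ c : Fin 3, c ≠ a ∧ c ≠ b := by decide

lemma Fq_succ {q : ℕ} (hq : 2 ≤ q) : Fq (q + 1) = Fq q ∪ NewF q := by
  apply Finset.Subset.antisymm
  · intro x hx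
    rw [mem_Fq] at hx
    obtain ⟨hlt, ⟨i0, hi0⟩, hpos, hgcd⟩ := hx
    by_cases hall : ∀ i, x i < q
    · exact Finset.mem_union_left _ (mem_Fq.mpr ⟨hall, ⟨i0, hi0⟩, hpos, hgcd⟩)
    push_neg at hall
    obtain ⟨i1, hi1⟩ := hall
    have hi1q : x i1 = q := by have := hlt i1; omega
    have hne : i0 ≠ i1 := by intro h; rw [h, hi1q] at hi0; omega
    obtain ⟨i2, h20, h21⟩ := three_dist i0 i1 hne
    set c := x i2 with hc
    have hfinj : Function.Injective ![i0, i2, i1] := by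
      intro a b h
      fin_cases a <;> fin_cases b <;> simp_all <;> first | rfl | (exfalso; simp_all)
    have hfbij : Function.Bijective ![i0, i2, i1] :=
      Finite.injective_iff_bijective.mp hfinj
    set e : Fin 3 ≃ Fin 3 := Equiv.ofBijective _ hfbij with he
    have hgx : Finset.univ.gcd x = Nat.gcd c q := by
      rw [← gcd_comp e x, gcd3]
      show Nat.gcd (x (e 0)) (Nat.gcd (x (e 1)) (x (e 2))) = _
      have e0 : e 0 = i0 := rfl
      have e1 : e 1 = i2 := rfl
      have e2 : e 2 = i1 := rfl
      rw [e0, e1, e2, hi0, hi1q, Nat.gcd_comm 0]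
      simp
      rfl
    have hgcd' : Nat.gcd c q = 1 := by rw [← hgx]; exact hgcd
    have hcq : c < q := by
      have hle : c ≤ q := by have := hlt i2; omega
      rcases Nat.lt_or_ge c q with h | h
      · exact h
      · exfalso
        have : c = q := by omega
        rw [this, Nat.gcd_self] at hgcd'; omega
    apply Finset.mem_union_right
    simp only [NewF, Finset.mem_image, Finset.mem_product, Finset.mem_filter,
      Finset.mem_range, Finset.mem_univ, true_and]
    refine ⟨⟨e.symm, c⟩, ⟨hcq, by rwa [Nat.Coprime, Nat.gcd_comm]⟩, ?_⟩
    funext i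
    show ![0, c, q] (e.symm i) = x i
    have : x (e (e.symm i)) = ![0, c, q] (e.symm i) := by
      generalize e.symm i = j
      fin_cases j
      · show x (e 0) = _; exact hi0
      · show x (e 1) = _; simp [hc]; rfl
      · show x (e 2) = _; exact hi1q
    rw [Equiv.apply_symm_apply] at this
    rw [this]
  · apply Finset.union_subset
    · intro x hx
      rw [mem_Fq] at hx ⊢
      exact ⟨fun i => Nat.lt_succ_of_lt (hx.1 i), hx.2⟩
    · exact NewF_subset hq

lemma disj_Fq_NewF {q : ℕ} (hq : 2 ≤ q) : Disjoint (Fq q) (NewF q) := by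
  rw [Finset.disjoint_left]
  intro x hx hx'
  rw [mem_Fq] at hx
  simp only [NewF, Finset.mem_image, Finset.mem_product, Finset.mem_filter,
    Finset.mem_range, Finset.mem_univ, true_and] at hx'
  obtain ⟨⟨σ, c⟩, _, rfl⟩ := hx'
  have := hx.1 (σ.symm 2)
  simp [gmap] at this

lemma card_Fq : ∀ q, 2 ≤ q →
    (Fq q).card = 6 * ∑ j ∈ Finset.Icc 1 (q - 1), Nat.totient j := by
  intro q hq
  induction q, hq using Nat.le_induction with
  | base => decide
  | succ n hn ih =>
    rw [Fq_succ hn, Finset.card_union_of_disjoint (disj_Fq_NewF hn), ih, card_NewF hn]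
    rw [show n + 1 - 1 = (n - 1) + 1 by omega, Finset.sum_Icc_succ_top (by omega), Nat.mul_add]
    rw [show n - 1 + 1 = n by omega]

/-- For any `q ≥ 2`, the number of triples in `{0,…,q-1}^3` with minimum
entry 0, positive maximum entry, and gcd of entries 1 equals
`6·∑_{j=1}^{q-1} φ(j)`. -/
theorem stmt_17 (q : ℕ) (hq : 2 ≤ q) :
    Set.ncard {x : Fin 3 → ℕ |
      (∀ i, x i ≤ q - 1) ∧ (∃ i, x i = 0) ∧ (∃ i, 0 < x i) ∧
      Finset.univ.gcd x = 1}
      = 6 * ∑ j ∈ Finset.Icc 1 (q - 1), Nat.totient j := by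
  have hset : {x : Fin 3 → ℕ |
      (∀ i, x i ≤ q - 1) ∧ (∃ i, x i = 0) ∧ (∃ i, 0 < x i) ∧
      Finset.univ.gcd x = 1} = ↑(Fq q) := by
    ext x
    rw [Set.mem_setOf_eq, Finset.mem_coe, mem_Fq]
    constructor
    · rintro ⟨h1, h2⟩
      exact ⟨fun i => by have := h1 i; omega, h2⟩
    · rintro ⟨h1, h2⟩
      exact ⟨fun i => by have := h1 i; omega, h2⟩
  rw [hset, Set.ncard_coe_finset, card_Fq q hq]
end

section
/- For q = 4 and n ≥ 2, the number of sequences in {0,1,2,3}^n with minimum entry 0, positive maximum, and gcd of entries 1 equals 4^n − 3^n − 2^{n+1} + 3. -/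
/-!
Since every entry is below `4`, the gcd of a tuple in `{0,1,2,3}ⁿ` is `0`, `1`, `2` or `3`, so it
differs from `1` exactly when all entries are even or all are divisible by `3`. Inclusion–exclusion
over these two events counts `4ⁿ - 2ⁿ - 2ⁿ + 1` tuples of gcd `1`; the same count in `{1,2,3}ⁿ`
gives `3ⁿ - 1 - 1 + 0ⁿ` tuples of gcd `1` without a zero entry. A positive entry is forced by
gcd `1`.
-/

open Finset Fintype

lemma Finset.gcd_lt_of_forall_lt {ι : Type*} {s : Finset ι} {x : ι → ℕ} {m : ℕ} (hm : 0 < m)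
    (hx : ∀ i ∈ s, x i < m) : s.gcd x < m := by
  by_cases h0 : s.gcd x = 0
  · rwa [h0]
  obtain ⟨j, hj, hxj⟩ : ∃ j ∈ s, x j ≠ 0 := by simpa [gcd_eq_zero_iff] using h0
  exact (Nat.le_of_dvd (Nat.pos_of_ne_zero hxj) (gcd_dvd hj)).trans_lt (hx j hj)

lemma Finset.gcd_eq_one_iff_of_forall_lt_four {ι : Type*} {s : Finset ι} {x : ι → ℕ}
    (hx : ∀ i ∈ s, x i < 4) :
    s.gcd x = 1 ↔ ¬(∀ i ∈ s, 2 ∣ x i) ∧ ¬(∀ i ∈ s, 3 ∣ x i) := by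
  rw [← dvd_gcd_iff, ← dvd_gcd_iff]
  have hlt := gcd_lt_of_forall_lt (by norm_num) hx
  generalize s.gcd x = g at hlt ⊢
  interval_cases g <;> decide

lemma Fintype.filter_piFinset_const_forall {ι α : Type*} [DecidableEq ι] [Fintype ι]
    (t : Finset α) (p : α → Prop) [DecidablePred p] :
    {x ∈ piFinset fun _ : ι => t | ∀ i, p (x i)} = piFinset fun _ => {a ∈ t | p a} := by
  ext x
  simp [mem_piFinset, forall_and]

lemma card_filter_gcd_eq_one_piFinset_add {ι : Type*} [DecidableEq ι] [Fintype ι] (t : Finset ℕ)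
    (ht : ∀ a ∈ t, a < 4) :
    #{x ∈ piFinset fun _ : ι => t | univ.gcd x = 1} + #{a ∈ t | 2 ∣ a} ^ card ι
      + #{a ∈ t | 3 ∣ a} ^ card ι = #t ^ card ι + #{a ∈ t | 2 ∣ a ∧ 3 ∣ a} ^ card ι := by
  have hcoprime : {x ∈ piFinset fun _ : ι => t | univ.gcd x = 1} =
      {x ∈ piFinset fun _ : ι => t | ¬((∀ i, 2 ∣ x i) ∨ ∀ i, 3 ∣ x i)} := by
    refine filter_congr fun x hx => ?_
    rw [gcd_eq_one_iff_of_forall_lt_four fun i _ => ht _ (mem_piFinset.1 hx i)]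
    simp
  have hsplit := card_filter_add_card_filter_not (s := piFinset fun _ : ι => t)
    (p := fun x => (∀ i, 2 ∣ x i) ∨ ∀ i, 3 ∣ x i)
  have hunion := card_union_add_card_inter {x ∈ piFinset fun _ : ι => t | ∀ i, 2 ∣ x i}
    {x ∈ piFinset fun _ : ι => t | ∀ i, 3 ∣ x i}
  rw [filter_or] at hsplit
  simp only [← filter_and, ← forall_and] at hunion
  rw [filter_piFinset_const_forall t fun a => 2 ∣ a ∧ 3 ∣ a] at hunion
  simp only [filter_piFinset_const_forall, card_piFinset, prod_const, card_univ] at hsplit hunion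
  rw [hcoprime]
  omega

lemma card_filter_gcd_eq_one_piFinset_range_four (ι : Type*) [DecidableEq ι] [Fintype ι] :
    #{x ∈ piFinset fun _ : ι => range 4 | univ.gcd x = 1} + 2 * 2 ^ card ι = 4 ^ card ι + 1 := by
  have h := card_filter_gcd_eq_one_piFinset_add (ι := ι) (range 4) fun a => mem_range.1
  rw [card_range, show #{a ∈ range 4 | 2 ∣ a} = 2 by decide,
    show #{a ∈ range 4 | 3 ∣ a} = 2 by decide,
    show #{a ∈ range 4 | 2 ∣ a ∧ 3 ∣ a} = 1 by decide, one_pow] at h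
  omega

lemma card_filter_gcd_eq_one_piFinset_nonzero (ι : Type*) [DecidableEq ι] [Fintype ι]
    [Nonempty ι] : #{x ∈ piFinset fun _ : ι => {a ∈ range 4 | a ≠ 0} | univ.gcd x = 1} + 2 =
      3 ^ card ι := by
  have h := card_filter_gcd_eq_one_piFinset_add (ι := ι) {a ∈ range 4 | a ≠ 0}
    fun a ha => mem_range.1 (mem_filter.1 ha).1
  rw [show #{a ∈ range 4 | a ≠ 0} = 3 by decide,
    show #{a ∈ {a ∈ range 4 | a ≠ 0} | 2 ∣ a} = 1 by decide,
    show #{a ∈ {a ∈ range 4 | a ≠ 0} | 3 ∣ a} = 1 by decide,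
    show #{a ∈ {a ∈ range 4 | a ≠ 0} | 2 ∣ a ∧ 3 ∣ a} = 0 by decide, one_pow,
    zero_pow card_ne_zero] at h
  omega

lemma Finset.exists_pos_of_gcd_eq_one {ι : Type*} {s : Finset ι} {x : ι → ℕ}
    (h : s.gcd x = 1) : ∃ i ∈ s, 0 < x i := by
  by_contra! h0
  simp [gcd_eq_zero_iff.2 fun i hi => Nat.le_zero.1 (h0 i hi)] at h

lemma card_filter_gcd_eq_one_exists_zero_piFinset_range_four (ι : Type*) [DecidableEq ι]
    [Fintype ι] [Nonempty ι] :
    #{x ∈ piFinset fun _ : ι => range 4 | univ.gcd x = 1 ∧ ∃ i, x i = 0} + 3 ^ card ι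
      + 2 * 2 ^ card ι = 4 ^ card ι + 3 := by
  have hsplit := card_filter_add_card_filter_not
    (s := {x ∈ piFinset fun _ : ι => range 4 | univ.gcd x = 1}) (p := fun x => ∃ i, x i = 0)
  have hnonzero : {x ∈ {x ∈ piFinset fun _ : ι => range 4 | univ.gcd x = 1} | ¬∃ i, x i = 0}
      = {x ∈ piFinset fun _ : ι => {a ∈ range 4 | a ≠ 0} | univ.gcd x = 1} := by
    rw [← filter_piFinset_const_forall, filter_filter, filter_filter]
    simp only [not_exists, and_comm]
  rw [filter_filter, hnonzero] at hsplit
  have hall := card_filter_gcd_eq_one_piFinset_range_four ι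
  have hpositive := card_filter_gcd_eq_one_piFinset_nonzero ι
  omega

lemma ncard_setOf_gcd_eq_one_exists_zero_le_three_add (ι : Type*) [Fintype ι] [Nonempty ι] :
    {x : ι → ℕ | (∀ i, x i ≤ 3) ∧ (∃ i, x i = 0) ∧ (∃ i, 0 < x i) ∧ univ.gcd x = 1}.ncard
      + 3 ^ card ι + 2 * 2 ^ card ι = 4 ^ card ι + 3 := by
  classical
  have hset : {x : ι → ℕ | (∀ i, x i ≤ 3) ∧ (∃ i, x i = 0) ∧ (∃ i, 0 < x i) ∧
      univ.gcd x = 1} = ↑{x ∈ piFinset fun _ : ι => range 4 | univ.gcd x = 1 ∧ ∃ i, x i = 0} := by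
    ext x
    simp only [Set.mem_ofPred_eq, coe_filter, mem_piFinset, mem_range]
    grind [exists_pos_of_gcd_eq_one]
  rw [hset, Set.ncard_coe_finset]
  exact card_filter_gcd_eq_one_exists_zero_piFinset_range_four ι

/-- For `q = 4` and `n ≥ 2`, the number of sequences in `{0,1,2,3}^n` with
some zero entry, some nonzero entry, and gcd of entries 1 equals
`4^n − 3^n − 2^{n+1} + 3`. -/
theorem stmt_19 (n : ℕ) (hn : 2 ≤ n) :
    ((Set.ncard {x : Fin n → ℕ |
        (∀ i, x i ≤ 3) ∧ (∃ i, x i = 0) ∧ (∃ i, 0 < x i) ∧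
        Finset.univ.gcd x = 1} : ℤ)
      = 4 ^ n - 3 ^ n - 2 ^ (n + 1) + 3) := by
  have : Nonempty (Fin n) := ⟨⟨0, by omega⟩⟩
  have hcount := congrArg (Nat.cast : ℕ → ℤ)
    (ncard_setOf_gcd_eq_one_exists_zero_le_three_add (Fin n))
  push_cast [Fintype.card_fin] at hcount
  linear_combination hcount
end
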